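/- Let U be an unrooted binary phylogenetic network and σ a complete cherry-reduction sequence for U. Then the number of cherry-picking sequences associated with σ is exactly 2^{r(U)}, where r(U) = |E| − (|V| − 1). -/

import Mathlib

/-!  Formalisation preliminaries for rooted and unrooted binary phylogenetic
networks, cherry reductions, cherry-reduction sequences and cherry-picking
sequences, following Döcker & Linz. -/

/-- A finite directed graph whose vertices are natural numbers. -/
structure DNet where
  verts : Finset ℕ
  arcs : Finset (ℕ × ℕ)

namespace DNet

/-- in-degree of a vertex -/
def inDeg (N : DNet) (v : ℕ) : ℕ := (N.arcs.filter (fun p => p.2 = v)).card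

/-- out-degree of a vertex -/
def outDeg (N : DNet) (v : ℕ) : ℕ := (N.arcs.filter (fun p => p.1 = v)).card

/-- the arc relation -/
def Arc (N : DNet) (u v : ℕ) : Prop := (u, v) ∈ N.arcs

/-- the digraph has no directed cycle -/
def Acyclic (N : DNet) : Prop := ∀ v, ¬ Relation.TransGen N.Arc v v

/-- root: in-degree 0 and out-degree 2 -/
def IsRoot (N : DNet) (v : ℕ) : Prop := v ∈ N.verts ∧ N.inDeg v = 0 ∧ N.outDeg v = 2

/-- leaf: in-degree 1 and out-degree 0 -/
def IsLeaf (N : DNet) (v : ℕ) : Prop := v ∈ N.verts ∧ N.inDeg v = 1 ∧ N.outDeg v = 0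

/-- tree vertex: in-degree 1 and out-degree 2 -/
def IsTreeVertex (N : DNet) (v : ℕ) : Prop := v ∈ N.verts ∧ N.inDeg v = 1 ∧ N.outDeg v = 2

/-- reticulation: in-degree 2 and out-degree 1 -/
def IsRet (N : DNet) (v : ℕ) : Prop := v ∈ N.verts ∧ N.inDeg v = 2 ∧ N.outDeg v = 1

/-- the network consists of a single vertex -/
def SingleVertex (N : DNet) : Prop := N.verts.card = 1 ∧ N.arcs = ∅

/-- the reticulation number of a rooted network: number of in-degree-2 vertices -/
def retNum (N : DNet) : ℕ := (N.verts.filter (fun v => N.inDeg v = 2)).card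

/-- tree-child: every vertex with a child has a child that is a tree vertex or a leaf -/
def TreeChild (N : DNet) : Prop :=
  ∀ v ∈ N.verts, N.outDeg v ≠ 0 → ∃ c, (v, c) ∈ N.arcs ∧ (N.IsTreeVertex c ∨ N.IsLeaf c)

/-- a stack: two reticulations joined by an arc -/
def HasStack (N : DNet) : Prop := ∃ u v, N.IsRet u ∧ N.IsRet v ∧ (u, v) ∈ N.arcs

/-- a pair of sibling reticulations: two reticulations with a common parent -/
def HasSiblingRets (N : DNet) : Prop :=
  ∃ p u v, u ≠ v ∧ N.IsRet u ∧ N.IsRet v ∧ (p, u) ∈ N.arcs ∧ (p, v) ∈ N.arcs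

/-- stack-free -/
def StackFree (N : DNet) : Prop := ¬ N.HasStack

end DNet

/-- `N` is a rooted binary phylogenetic network with leaf set `X`
(including the degenerate single-vertex network when `|X| = 1`). -/
def IsRootedBinaryNet (N : DNet) (X : Finset ℕ) : Prop :=
  (∃ x, X = {x} ∧ N.verts = {x} ∧ N.arcs = ∅) ∨
  ((∀ p ∈ N.arcs, p.1 ∈ N.verts ∧ p.2 ∈ N.verts) ∧
   (∀ p ∈ N.arcs, p.1 ≠ p.2) ∧
   N.Acyclic ∧
   (∃! ρ, ρ ∈ N.verts ∧ N.inDeg ρ = 0) ∧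
   (∀ v ∈ N.verts, N.IsRoot v ∨ N.IsLeaf v ∨ N.IsTreeVertex v ∨ N.IsRet v) ∧
   (∀ v, N.IsLeaf v ↔ v ∈ X))

/-- `[a,b]` is a cherry of the rooted network `N` (with `a` the leaf to be deleted). -/
def RCherry (N : DNet) (a b : ℕ) : Prop :=
  a ≠ b ∧ N.IsLeaf a ∧ N.IsLeaf b ∧ ∃ p, (p, a) ∈ N.arcs ∧ (p, b) ∈ N.arcs

/-- `(a,b)` is a reticulated cherry of the rooted network `N` with reticulation leaf `a`:
the parent of `a` is a reticulation and receives an arc from the parent of `b`. -/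
def RRetCherry (N : DNet) (a b : ℕ) : Prop :=
  a ≠ b ∧ N.IsLeaf a ∧ N.IsLeaf b ∧
  ∃ pa pb, (pa, a) ∈ N.arcs ∧ (pb, b) ∈ N.arcs ∧ N.IsRet pa ∧ (pb, pa) ∈ N.arcs

/-- `M` is obtained from the rooted network `N` by reducing the cherry `[a,b]`:
delete `a` and suppress (or, if it is the root, delete) the resulting degree-2 vertex. -/
def RReduceCherry (N M : DNet) (a b : ℕ) : Prop :=
  RCherry N a b ∧
  ∃ p, (p, a) ∈ N.arcs ∧ (p, b) ∈ N.arcs ∧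
    ((N.inDeg p = 0 ∧ M.verts = N.verts \ {a, p} ∧ M.arcs = N.arcs \ {(p, a), (p, b)}) ∨
     (∃ g, (g, p) ∈ N.arcs ∧ M.verts = N.verts \ {a, p} ∧
        M.arcs = insert (g, b) (N.arcs \ {(g, p), (p, a), (p, b)})))

/-- `M` is obtained from the rooted network `N` by reducing the reticulated cherry `(a,b)`
with reticulation leaf `a`: delete the reticulation arc `(p_b, p_a)` and suppress the two
resulting degree-2 vertices. -/
def RReduceRetCherry (N M : DNet) (a b : ℕ) : Prop :=
  RRetCherry N a b ∧
  ∃ pa pb qa qb, (pa, a) ∈ N.arcs ∧ (pb, b) ∈ N.arcs ∧ N.IsRet pa ∧ (pb, pa) ∈ N.arcs ∧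
    (qa, pa) ∈ N.arcs ∧ qa ≠ pb ∧ (qb, pb) ∈ N.arcs ∧
    M.verts = N.verts \ {pa, pb} ∧
    M.arcs = insert (qa, a) (insert (qb, b)
      (N.arcs \ {(pb, pa), (pa, a), (qa, pa), (pb, b), (qb, pb)}))

/-- A recorded reduction: either a cherry pair `[x,y]` or a reticulated-cherry pair `(x,y)`
(the deleted leaf, resp. the reticulation leaf, is listed first). -/
inductive Pick where
  | cherry (x y : ℕ)
  | ret (x y : ℕ)
deriving DecidableEq

namespace Pick

/-- first coordinate -/
def fst : Pick → ℕ
  | cherry x _ => x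
  | ret x _ => x

/-- second coordinate -/
def snd : Pick → ℕ
  | cherry _ y => y
  | ret _ y => y

/-- the pair contains the element `z` -/
def Contains (r : Pick) (z : ℕ) : Prop := r.fst = z ∨ r.snd = z

/-- the pair is a reticulated-cherry pair -/
def IsRetPair : Pick → Prop
  | cherry _ _ => False
  | ret _ _ => True

/-- the pair is a cherry pair -/
def IsCherryPair : Pick → Prop
  | cherry _ _ => True
  | ret _ _ => False

end Pick

/-- The step from `N` to `M` is the cherry reduction recorded by the pick `r`
(rooted version). -/
def RStep (N M : DNet) : Pick → Prop
  | .cherry x y => RReduceCherry N M x y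
  | .ret x y => RReduceRetCherry N M x y

/-- `(Ns 0, …, Ns k)` is a cherry-reduction sequence of rooted networks whose associated
cherry-picking sequence is `(rs 0, …, rs (k-1))`. -/
def RCherrySeq (Ns : ℕ → DNet) (rs : ℕ → Pick) (k : ℕ) : Prop :=
  ∀ i < k, RStep (Ns i) (Ns (i + 1)) (rs i)

/-- `(Ns 0, …, Ns k)` is a cherry-reduction sequence of rooted networks. -/
def RReductionSeq (Ns : ℕ → DNet) (k : ℕ) : Prop :=
  ∀ i < k, ∃ r, RStep (Ns i) (Ns (i + 1)) r

/-- `R` is a rooted orchard network: it admits a complete cherry-reduction sequence. -/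
def Orchard (R : DNet) : Prop :=
  ∃ Ns k, Ns 0 = R ∧ RReductionSeq Ns k ∧ (Ns k).SingleVertex

/-- `j = s(i)`: the smallest index `j > i` (within the sequence of length `k`) such that
`rs j` contains the first coordinate of `rs i`. -/
def SuccAt (rs : ℕ → Pick) (k i j : ℕ) : Prop :=
  i < j ∧ j < k ∧ (rs j).Contains (rs i).fst ∧
  ∀ l, i < l → l < j → ¬ (rs l).Contains (rs i).fst

/-- Property (P1): the successor pair of every reticulated-cherry pair, if it exists,
is a cherry pair. -/
def SeqP1 (rs : ℕ → Pick) (k : ℕ) : Prop :=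
  ∀ i j, (rs i).IsRetPair → SuccAt rs k i j → (rs j).IsCherryPair

/-- Property (P2): no element of the sequence is the successor pair of two distinct
reticulated-cherry pairs. -/
def SeqP2 (rs : ℕ → Pick) (k : ℕ) : Prop :=
  ∀ i i' j, i ≠ i' → (rs i).IsRetPair → (rs i').IsRetPair →
    SuccAt rs k i j → SuccAt rs k i' j → False

/-- A tree-child cherry-picking sequence: one satisfying (P1) and (P2). -/
def TreeChildSeq (rs : ℕ → Pick) (k : ℕ) : Prop := SeqP1 rs k ∧ SeqP2 rs k

/-- Property (P3): the first coordinate of each pair does not occur as the second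
coordinate of any later pair. -/
def SeqP3 (rs : ℕ → Pick) (k : ℕ) : Prop :=
  ∀ i j, i < j → j < k → (rs i).fst ≠ (rs j).snd

/-- A finite undirected graph whose vertices are natural numbers. -/
structure UNet where
  verts : Finset ℕ
  edges : Finset (Sym2 ℕ)

namespace UNet

/-- degree of a vertex -/
def deg (U : UNet) (v : ℕ) : ℕ := (U.edges.filter (fun e => v ∈ e)).card

/-- adjacency -/
def Adj (U : UNet) (u v : ℕ) : Prop := u ≠ v ∧ s(u, v) ∈ U.edges

/-- connectedness -/
def Connected (U : UNet) : Prop :=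
  ∀ u ∈ U.verts, ∀ v ∈ U.verts, Relation.ReflTransGen U.Adj u v

/-- leaf: degree-1 vertex -/
def IsLeaf (U : UNet) (v : ℕ) : Prop := v ∈ U.verts ∧ U.deg v = 1

/-- the network consists of a single vertex -/
def SingleVertex (U : UNet) : Prop := U.verts.card = 1 ∧ U.edges = ∅

/-- the reticulation number of an unrooted network: `|E| - (|V| - 1)` -/
def retNum (U : UNet) : ℕ := U.edges.card - (U.verts.card - 1)

end UNet

/-- `U` is an unrooted binary phylogenetic network with leaf set `X`
(including the degenerate single-vertex network when `|X| = 1`). -/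
def IsUnrootedBinaryNet (U : UNet) (X : Finset ℕ) : Prop :=
  (∃ x, X = {x} ∧ U.verts = {x} ∧ U.edges = ∅) ∨
  ((∀ e ∈ U.edges, ¬ e.IsDiag ∧ ∀ v ∈ e, v ∈ U.verts) ∧
   U.Connected ∧
   (∀ v ∈ U.verts, U.deg v = 1 ∨ U.deg v = 3) ∧
   (∀ v, U.IsLeaf v ↔ v ∈ X))

/-- `[a,b]` is a cherry of the unrooted network `U`. -/
def UCherry (U : UNet) (a b : ℕ) : Prop :=
  a ≠ b ∧ U.IsLeaf a ∧ U.IsLeaf b ∧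
  ((∃ p, s(a, p) ∈ U.edges ∧ s(b, p) ∈ U.edges ∧ p ≠ a ∧ p ≠ b) ∨ U.edges = {s(a, b)})

/-- the edge `{u,v}` lies on a cycle of `U` -/
def UOnCycle (U : UNet) (u v : ℕ) : Prop :=
  s(u, v) ∈ U.edges ∧
  Relation.ReflTransGen (fun x y => x ≠ y ∧ s(x, y) ∈ U.edges ∧ s(x, y) ≠ s(u, v)) u v

/-- `(a,b)` is a reticulated cherry of the unrooted network `U` with reticulation
edge `{u,v}`. -/
def URetCherry (U : UNet) (a b : ℕ) : Prop :=
  a ≠ b ∧ U.IsLeaf a ∧ U.IsLeaf b ∧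
  ∃ u v, s(a, u) ∈ U.edges ∧ s(u, v) ∈ U.edges ∧ s(v, b) ∈ U.edges ∧
    u ≠ v ∧ u ≠ a ∧ v ≠ b ∧ UOnCycle U u v

/-- `W` is obtained from `U` by reducing the cherry `[a,b]`: delete `a` and, if `U` has
at least two edges, suppress the resulting degree-2 vertex. -/
def UReduceCherry (U W : UNet) (a b : ℕ) : Prop :=
  UCherry U a b ∧
  ((U.edges = {s(a, b)} ∧ W.verts = U.verts \ {a} ∧ W.edges = ∅) ∨
   (∃ p g, s(a, p) ∈ U.edges ∧ s(b, p) ∈ U.edges ∧ s(p, g) ∈ U.edges ∧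
      p ≠ a ∧ p ≠ b ∧ g ≠ a ∧ g ≠ b ∧ g ≠ p ∧
      W.verts = U.verts \ {a, p} ∧
      W.edges = insert s(b, g) (U.edges \ {s(a, p), s(b, p), s(p, g)})))

/-- `W` is obtained from `U` by reducing the reticulated cherry `(a,b)`: delete the
reticulation edge `{u,v}` and suppress the two resulting degree-2 vertices. -/
def UReduceRetCherry (U W : UNet) (a b : ℕ) : Prop :=
  URetCherry U a b ∧
  ∃ u v ga gb, s(a, u) ∈ U.edges ∧ s(u, v) ∈ U.edges ∧ s(v, b) ∈ U.edges ∧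
    u ≠ v ∧ u ≠ a ∧ v ≠ b ∧ UOnCycle U u v ∧
    s(u, ga) ∈ U.edges ∧ ga ≠ a ∧ ga ≠ v ∧ ga ≠ u ∧
    s(v, gb) ∈ U.edges ∧ gb ≠ b ∧ gb ≠ u ∧ gb ≠ v ∧
    W.verts = U.verts \ {u, v} ∧
    W.edges = insert s(a, ga) (insert s(b, gb)
      (U.edges \ {s(u, v), s(a, u), s(u, ga), s(v, b), s(v, gb)}))

/-- The step from `U` to `W` is the cherry reduction recorded by the pick `r`
(unrooted version). -/
def UStep (U W : UNet) : Pick → Prop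
  | .cherry x y => UReduceCherry U W x y
  | .ret x y => UReduceRetCherry U W x y

/-- `(Us 0, …, Us k)` is a cherry-reduction sequence of unrooted networks whose associated
cherry-picking sequence is `(rs 0, …, rs (k-1))`. -/
def UCherrySeq (Us : ℕ → UNet) (rs : ℕ → Pick) (k : ℕ) : Prop :=
  ∀ i < k, UStep (Us i) (Us (i + 1)) (rs i)

/-- `(Us 0, …, Us k)` is a cherry-reduction sequence of unrooted networks. -/
def UReductionSeq (Us : ℕ → UNet) (k : ℕ) : Prop :=
  ∀ i < k, ∃ r, UStep (Us i) (Us (i + 1)) r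

/-- The rooted network `R` is an orientation of the unrooted network `U`: `U` is obtained
from `R` by forgetting arc directions and suppressing the root. -/
def IsOrientationOf (R : DNet) (U : UNet) : Prop :=
  (R.arcs = ∅ ∧ U.edges = ∅ ∧ U.verts = R.verts) ∨
  (∃ ρ c₁ c₂, ρ ∈ R.verts ∧ R.inDeg ρ = 0 ∧ c₁ ≠ c₂ ∧
    (ρ, c₁) ∈ R.arcs ∧ (ρ, c₂) ∈ R.arcs ∧
    U.verts = R.verts.erase ρ ∧
    U.edges = insert s(c₁, c₂)
      ((R.arcs.filter (fun p => p.1 ≠ ρ)).image (fun p => s(p.1, p.2))))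

/-- `U` is an unrooted tree-child network on `X`: it has a tree-child orientation. -/
def UnrootedTreeChild (U : UNet) (X : Finset ℕ) : Prop :=
  ∃ R : DNet, IsRootedBinaryNet R X ∧ R.TreeChild ∧ IsOrientationOf R U

/-- The pick `r` is one of the picks associated with the recorded reduction `p`:
it must agree with `p` on cherry reductions, and may swap the two coordinates of a
reticulated-cherry reduction. -/
def PickAssoc : Pick → Pick → Prop
  | .cherry x y, r => r = .cherry x y
  | .ret x y, r => r = .ret x y ∨ r = .ret y x

/-- `X`-labelled isomorphism of unrooted networks. -/
def UIso (X : Finset ℕ) (U W : UNet) : Prop :=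
  ∃ f : ℕ → ℕ, Set.BijOn f ↑U.verts ↑W.verts ∧ (∀ x ∈ X, f x = x) ∧
    W.edges = U.edges.image (Sym2.map f)

section AuxForCardAssoc

/-- boolean test for reticulated-cherry pairs -/
def isRetB : Pick → Bool
  | .ret _ _ => true
  | _ => false

/-- the finset of picks associated to a recorded reduction -/
def pickSet : Pick → Finset Pick
  | .cherry x y => {.cherry x y}
  | .ret x y => {.ret x y, .ret y x}

lemma mem_pickSet (p r : Pick) : r ∈ pickSet p ↔ PickAssoc p r := by
  cases p <;> simp [pickSet, PickAssoc]

lemma card_pickSet (p : Pick) (h : ∀ x y, p = .ret x y → x ≠ y) :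
    (pickSet p).card = if isRetB p = true then 2 else 1 := by
  cases p with
  | cherry x y => simp [pickSet, isRetB]
  | ret x y =>
    have hxy := h _ _ rfl
    simp only [pickSet, isRetB, if_pos]
    rw [Finset.card_insert_of_notMem (by simp [hxy]), Finset.card_singleton]

lemma mem_of_leafAux {U : UNet} {b p : ℕ} (hd : U.deg b = 1) (hbp : s(b,p) ∈ U.edges) :
    ∀ e ∈ U.edges, b ∈ e → e = s(b,p) := by
  intro e he hbe
  have h1 : s(b,p) ∈ U.edges.filter (fun e => b ∈ e) := Finset.mem_filter.2 ⟨hbp, by simp⟩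
  have h2 : e ∈ U.edges.filter (fun e => b ∈ e) := Finset.mem_filter.2 ⟨he, hbe⟩
  exact Finset.card_le_one.1 (le_of_eq hd) _ h2 _ h1

lemma cardFormulaAux {E S A : Finset (Sym2 ℕ)} (hSE : S ⊆ E) (hA : ∀ e ∈ A, e ∉ E) :
    (A ∪ (E \ S)).card + S.card = A.card + E.card := by
  have hdisj : Disjoint A (E \ S) := by
    rw [Finset.disjoint_left]
    intro e heA heS
    exact hA e heA (Finset.mem_sdiff.1 heS).1
  rw [Finset.card_union_of_disjoint hdisj, Finset.card_sdiff_of_subset hSE]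
  have := Finset.card_le_card hSE
  omega

lemma degFormulaAux {E S A : Finset (Sym2 ℕ)} (hSE : S ⊆ E) (hA : ∀ e ∈ A, e ∉ E) (v : ℕ) :
    ((A ∪ (E \ S)).filter (fun e => v ∈ e)).card + (S.filter (fun e => v ∈ e)).card
      = (A.filter (fun e => v ∈ e)).card + (E.filter (fun e => v ∈ e)).card := by
  have h1 : (A ∪ (E \ S)).filter (fun e => v ∈ e)
      = (A.filter (fun e => v ∈ e)) ∪
        ((E.filter (fun e => v ∈ e)) \ (S.filter (fun e => v ∈ e))) := by
    ext e
    simp only [Finset.mem_filter, Finset.mem_union, Finset.mem_sdiff]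
    tauto
  rw [h1]
  exact cardFormulaAux (Finset.filter_subset_filter _ hSE)
    (fun e he hmem => hA e (Finset.mem_filter.1 he).1 (Finset.mem_filter.1 hmem).1)

/-- invariant maintained along an unrooted cherry-reduction sequence -/
def InvAux (U : UNet) : Prop :=
  (∀ e ∈ U.edges, ∀ w ∈ e, w ∈ U.verts) ∧
  (U.edges = ∅ ∨ ∀ v ∈ U.verts, U.deg v = 1 ∨ U.deg v = 3)

lemma cherryStepAux {U W : UNet} {a b : ℕ} (h : UReduceCherry U W a b) (hI : InvAux U) :
    InvAux W ∧ ∃ d, W.verts.card + d = U.verts.card ∧ W.edges.card + d = U.edges.card := by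
  obtain ⟨⟨hab, ⟨haV, hda⟩, ⟨hbV, hdb⟩, -⟩, hcase⟩ := h
  obtain ⟨hEnd, hDegOr⟩ := hI
  rcases hcase with ⟨hE, hWv, hWe⟩ | ⟨p, g, hap, hbp, hpg, hpa, hpb, hga, hgb, hgp, hWv, hWe⟩
  · refine ⟨⟨?_, Or.inl hWe⟩, 1, ?_, ?_⟩
    · intro e he
      rw [hWe] at he
      exact absurd he (Finset.notMem_empty e)
    · have h1 : ({a} : Finset ℕ) ⊆ U.verts := by simpa using haV
      have h2 := Finset.card_le_card h1
      rw [hWv, Finset.card_sdiff_of_subset h1]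
      simp only [Finset.card_singleton] at h2 ⊢
      omega
    · rw [hWe, hE]
      simp
  · have hDeg : ∀ v ∈ U.verts, U.deg v = 1 ∨ U.deg v = 3 := by
      rcases hDegOr with h' | h'
      · rw [h'] at hap
        exact absurd hap (Finset.notMem_empty _)
      · exact h'
    have hpV : p ∈ U.verts := hEnd _ hap p (by simp)
    have hgV : g ∈ U.verts := hEnd _ hpg g (by simp)
    set S : Finset (Sym2 ℕ) := {s(a,p), s(b,p), s(p,g)} with hS
    set A : Finset (Sym2 ℕ) := {s(b,g)} with hA
    have hSE : S ⊆ U.edges := by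
      intro e he
      rcases Finset.mem_insert.1 he with rfl | he
      · exact hap
      rcases Finset.mem_insert.1 he with rfl | he
      · exact hbp
      · rw [Finset.mem_singleton.1 he]; exact hpg
    have haonly : ∀ e ∈ U.edges, a ∈ e → e = s(a,p) := mem_of_leafAux hda hap
    have hbonly : ∀ e ∈ U.edges, b ∈ e → e = s(b,p) := mem_of_leafAux hdb hbp
    have hbgE : s(b,g) ∉ U.edges := by
      intro hmem
      have h1 := hbonly _ hmem (by simp)
      rw [Sym2.eq_iff] at h1
      omega
    have hAE : ∀ e ∈ A, e ∉ U.edges := by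
      intro e he
      rw [hA, Finset.mem_singleton] at he
      rw [he]; exact hbgE
    have hWe' : W.edges = A ∪ (U.edges \ S) := by
      rw [hWe, hA, hS, Finset.insert_eq]
    have hScard : S.card = 3 := by
      rw [hS, Finset.card_insert_of_notMem, Finset.card_insert_of_notMem,
        Finset.card_singleton]
      · simp only [Finset.mem_singleton, Sym2.eq_iff]; omega
      · simp only [Finset.mem_insert, Finset.mem_singleton, Sym2.eq_iff]; omega
    have hSsubfil : S ⊆ U.edges.filter (fun e => p ∈ e) := by
      intro e he
      refine Finset.mem_filter.2 ⟨hSE he, ?_⟩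
      rw [hS] at he
      rcases Finset.mem_insert.1 he with rfl | he
      · simp
      rcases Finset.mem_insert.1 he with rfl | he
      · simp
      · rw [Finset.mem_singleton.1 he]; simp
    have hdegfil : U.deg p = (U.edges.filter (fun e => p ∈ e)).card := rfl
    have hdegp : U.deg p = 3 := by
      have h3 := Finset.card_le_card hSsubfil
      rw [hScard] at h3
      rcases hDeg p hpV with h' | h' <;> omega
    have heqS : S = U.edges.filter (fun e => p ∈ e) :=
      Finset.eq_of_subset_of_card_le hSsubfil (by rw [hScard, ← hdegfil, hdegp])
    have hponly : ∀ e ∈ U.edges, p ∈ e → e ∈ S := by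
      intro e he hpe
      rw [heqS]
      exact Finset.mem_filter.2 ⟨he, hpe⟩
    have hEndW : ∀ e ∈ W.edges, ∀ w ∈ e, w ∈ W.verts := by
      intro e he w hw
      rw [hWv]
      rw [hWe'] at he
      rcases Finset.mem_union.1 he with he | he
      · rw [hA, Finset.mem_singleton] at he
        subst he
        rw [Sym2.mem_iff] at hw
        rcases hw with rfl | rfl
        · exact Finset.mem_sdiff.2 ⟨hbV, by simp only [Finset.mem_insert, Finset.mem_singleton]; omega⟩
        · exact Finset.mem_sdiff.2 ⟨hgV, by simp only [Finset.mem_insert, Finset.mem_singleton]; omega⟩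
      · obtain ⟨heE, heS⟩ := Finset.mem_sdiff.1 he
        refine Finset.mem_sdiff.2 ⟨hEnd _ heE w hw, ?_⟩
        simp only [Finset.mem_insert, Finset.mem_singleton]
        push_neg
        constructor
        · rintro rfl
          exact heS (by rw [haonly e heE hw, hS]; simp)
        · rintro rfl
          exact heS (hponly e heE hw)
    have hDegW : ∀ v ∈ W.verts, W.deg v = 1 ∨ W.deg v = 3 := by
      intro v hv
      rw [hWv, Finset.mem_sdiff] at hv
      obtain ⟨hvV, hvap⟩ := hv
      simp only [Finset.mem_insert, Finset.mem_singleton] at hvap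
      push_neg at hvap
      obtain ⟨hva, hvp⟩ := hvap
      have hform := degFormulaAux hSE hAE v
      rw [← hWe'] at hform
      have key : (A.filter (fun e => v ∈ e)).card = (S.filter (fun e => v ∈ e)).card := by
        by_cases hvb : v = b
        · subst hvb
          have e1 : A.filter (fun e => v ∈ e) = {s(v,g)} := by
            rw [hA, Finset.filter_singleton, if_pos (by simp)]
          have e2 : S.filter (fun e => v ∈ e) = {s(v,p)} := by
            rw [hS, Finset.filter_insert, if_neg (by rw [Sym2.mem_iff]; omega),
              Finset.filter_insert, if_pos (by simp), Finset.filter_singleton,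
              if_neg (by rw [Sym2.mem_iff]; omega)]
            simp
          simp [e1, e2]
        · by_cases hvg : v = g
          · subst hvg
            have e1 : A.filter (fun e => v ∈ e) = {s(b,v)} := by
              rw [hA, Finset.filter_singleton, if_pos (by simp)]
            have e2 : S.filter (fun e => v ∈ e) = {s(p,v)} := by
              rw [hS, Finset.filter_insert, if_neg (by rw [Sym2.mem_iff]; omega),
                Finset.filter_insert, if_neg (by rw [Sym2.mem_iff]; omega),
                Finset.filter_singleton, if_pos (by simp)]
            simp [e1, e2]
          · have e1 : A.filter (fun e => v ∈ e) = ∅ := by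
              rw [hA, Finset.filter_singleton, if_neg (by rw [Sym2.mem_iff]; omega)]
            have e2 : S.filter (fun e => v ∈ e) = ∅ := by
              rw [hS, Finset.filter_insert, if_neg (by rw [Sym2.mem_iff]; omega),
                Finset.filter_insert, if_neg (by rw [Sym2.mem_iff]; omega),
                Finset.filter_singleton, if_neg (by rw [Sym2.mem_iff]; omega)]
            rw [e1, e2]
      have hSle : (S.filter (fun e => v ∈ e)).card ≤ (U.edges.filter (fun e => v ∈ e)).card :=
        Finset.card_le_card (Finset.filter_subset_filter _ hSE)
      have hdv : (U.edges.filter (fun e => v ∈ e)).card = 1 ∨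
          (U.edges.filter (fun e => v ∈ e)).card = 3 := hDeg v hvV
      show (W.edges.filter (fun e => v ∈ e)).card = 1 ∨
        (W.edges.filter (fun e => v ∈ e)).card = 3
      omega
    have hcard := cardFormulaAux hSE hAE
    rw [← hWe'] at hcard
    have hApc : A.card = 1 := by rw [hA, Finset.card_singleton]
    have hvertcard : W.verts.card + 2 = U.verts.card := by
      have hsub : ({a, p} : Finset ℕ) ⊆ U.verts := by
        intro x hx
        simp only [Finset.mem_insert, Finset.mem_singleton] at hx
        rcases hx with rfl | rfl
        exacts [haV, hpV]
      have hc2 : ({a, p} : Finset ℕ).card = 2 :=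
        Finset.card_pair (by omega)
      have h2 := Finset.card_le_card hsub
      rw [hc2] at h2
      rw [hWv, Finset.card_sdiff_of_subset hsub, hc2]
      omega
    exact ⟨⟨hEndW, Or.inr hDegW⟩, 2, hvertcard, by omega⟩

set_option maxHeartbeats 1000000 in
lemma retStepAux {U W : UNet} {a b : ℕ} (h : UReduceRetCherry U W a b) (hI : InvAux U) :
    InvAux W ∧ W.verts.card + 2 = U.verts.card ∧ W.edges.card + 3 = U.edges.card := by
  obtain ⟨⟨hab, ⟨haV, hda⟩, ⟨hbV, hdb⟩, -⟩, u, v, ga, gb, hau, huv, hvb, hune, hua, hvbne,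
    hcyc, huga, hgaa, hgav, hgau, hvgb, hgbb, hgbu, hgbv, hWv, hWe⟩ := h
  obtain ⟨hEnd, hDegOr⟩ := hI
  have hDeg : ∀ w ∈ U.verts, U.deg w = 1 ∨ U.deg w = 3 := by
    rcases hDegOr with h' | h'
    · rw [h'] at hau
      exact absurd hau (Finset.notMem_empty _)
    · exact h'
  have hua' : s(a,u) ∈ U.edges := hau
  have hbv' : s(b,v) ∈ U.edges := by rw [Sym2.eq_swap]; exact hvb
  have haonly : ∀ e ∈ U.edges, a ∈ e → e = s(a,u) := mem_of_leafAux hda hua'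
  have hbonly : ∀ e ∈ U.edges, b ∈ e → e = s(b,v) := mem_of_leafAux hdb hbv'
  have hva : v ≠ a := by
    intro hEq
    have h1 := haonly _ hvb (by rw [Sym2.mem_iff]; omega)
    rw [Sym2.eq_iff] at h1
    have hbu : b = u := by omega
    have h2 := hbonly _ huga (by rw [Sym2.mem_iff]; omega)
    rw [Sym2.eq_iff] at h2
    omega
  have hub : u ≠ b := by
    intro hEq
    have h1 := hbonly _ hau (by rw [Sym2.mem_iff]; omega)
    rw [Sym2.eq_iff] at h1
    omega
  have hgab : ga ≠ b := by
    intro hEq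
    have h1 := hbonly _ huga (by rw [Sym2.mem_iff]; omega)
    rw [Sym2.eq_iff] at h1
    omega
  have hgba : gb ≠ a := by
    intro hEq
    have h1 := haonly _ hvgb (by rw [Sym2.mem_iff]; omega)
    rw [Sym2.eq_iff] at h1
    omega
  have hagaE : s(a,ga) ∉ U.edges := by
    intro hmem
    have h1 := haonly _ hmem (by simp)
    rw [Sym2.eq_iff] at h1
    omega
  have hbgbE : s(b,gb) ∉ U.edges := by
    intro hmem
    have h1 := hbonly _ hmem (by simp)
    rw [Sym2.eq_iff] at h1
    omega
  set S : Finset (Sym2 ℕ) := {s(u,v), s(a,u), s(u,ga), s(v,b), s(v,gb)} with hS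
  set A : Finset (Sym2 ℕ) := {s(a,ga), s(b,gb)} with hA
  have hSE : S ⊆ U.edges := by
    intro e he
    rw [hS] at he
    rcases Finset.mem_insert.1 he with rfl | he
    · exact huv
    rcases Finset.mem_insert.1 he with rfl | he
    · exact hau
    rcases Finset.mem_insert.1 he with rfl | he
    · exact huga
    rcases Finset.mem_insert.1 he with rfl | he
    · exact hvb
    · rw [Finset.mem_singleton.1 he]; exact hvgb
  have hAE : ∀ e ∈ A, e ∉ U.edges := by
    intro e he
    rw [hA] at he
    rcases Finset.mem_insert.1 he with rfl | he
    · exact hagaE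
    · rw [Finset.mem_singleton.1 he]; exact hbgbE
  have hWe' : W.edges = A ∪ (U.edges \ S) := by
    rw [hWe]
    ext e
    simp only [hA, Finset.mem_insert, Finset.mem_union, Finset.mem_sdiff, Finset.mem_singleton]
    tauto
  have hScard : S.card = 5 := by
    rw [hS, Finset.card_insert_of_notMem, Finset.card_insert_of_notMem,
      Finset.card_insert_of_notMem, Finset.card_insert_of_notMem, Finset.card_singleton]
    · simp only [Finset.mem_singleton, Sym2.eq_iff]; omega
    · simp only [Finset.mem_insert, Finset.mem_singleton, Sym2.eq_iff]; omega
    · simp only [Finset.mem_insert, Finset.mem_singleton, Sym2.eq_iff]; omega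
    · simp only [Finset.mem_insert, Finset.mem_singleton, Sym2.eq_iff]; omega
  have hAcard : A.card = 2 := by
    rw [hA]
    exact Finset.card_pair (by rw [Ne, Sym2.eq_iff]; omega)
  -- degree-3 structure at u
  have huV : u ∈ U.verts := hEnd _ hau u (by simp)
  have hvV : v ∈ U.verts := hEnd _ huv v (by simp)
  have hgaV : ga ∈ U.verts := hEnd _ huga ga (by simp)
  have hgbV : gb ∈ U.verts := hEnd _ hvgb gb (by simp)
  have hSucard : ({s(a,u), s(u,v), s(u,ga)} : Finset (Sym2 ℕ)).card = 3 := by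
    rw [Finset.card_insert_of_notMem, Finset.card_insert_of_notMem, Finset.card_singleton]
    · simp only [Finset.mem_singleton, Sym2.eq_iff]; omega
    · simp only [Finset.mem_insert, Finset.mem_singleton, Sym2.eq_iff]; omega
  have hSusub : ({s(a,u), s(u,v), s(u,ga)} : Finset (Sym2 ℕ)) ⊆
      U.edges.filter (fun e => u ∈ e) := by
    intro e he
    refine Finset.mem_filter.2 ⟨?_, ?_⟩ <;>
    · rcases Finset.mem_insert.1 he with rfl | he
      · first | exact hau | simp
      rcases Finset.mem_insert.1 he with rfl | he
      · first | exact huv | simp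
      · rw [Finset.mem_singleton.1 he]
        first | exact huga | simp
  have hdegfilu : U.deg u = (U.edges.filter (fun e => u ∈ e)).card := rfl
  have hdegu : U.deg u = 3 := by
    have h3 := Finset.card_le_card hSusub
    rw [hSucard] at h3
    rcases hDeg u huV with h' | h' <;> omega
  have huonly : ∀ e ∈ U.edges, u ∈ e → e ∈ S := by
    have heq : ({s(a,u), s(u,v), s(u,ga)} : Finset (Sym2 ℕ)) =
        U.edges.filter (fun e => u ∈ e) :=
      Finset.eq_of_subset_of_card_le hSusub (by rw [hSucard, ← hdegfilu, hdegu])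
    intro e he hue
    have : e ∈ ({s(a,u), s(u,v), s(u,ga)} : Finset (Sym2 ℕ)) := by
      rw [heq]; exact Finset.mem_filter.2 ⟨he, hue⟩
    rw [hS]
    simp only [Finset.mem_insert, Finset.mem_singleton] at this ⊢
    tauto
  have hSvcard : ({s(u,v), s(v,b), s(v,gb)} : Finset (Sym2 ℕ)).card = 3 := by
    rw [Finset.card_insert_of_notMem, Finset.card_insert_of_notMem, Finset.card_singleton]
    · simp only [Finset.mem_singleton, Sym2.eq_iff]; omega
    · simp only [Finset.mem_insert, Finset.mem_singleton, Sym2.eq_iff]; omega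
  have hSvsub : ({s(u,v), s(v,b), s(v,gb)} : Finset (Sym2 ℕ)) ⊆
      U.edges.filter (fun e => v ∈ e) := by
    intro e he
    refine Finset.mem_filter.2 ⟨?_, ?_⟩ <;>
    · rcases Finset.mem_insert.1 he with rfl | he
      · first | exact huv | simp
      rcases Finset.mem_insert.1 he with rfl | he
      · first | exact hvb | simp
      · rw [Finset.mem_singleton.1 he]
        first | exact hvgb | simp
  have hdegfilv : U.deg v = (U.edges.filter (fun e => v ∈ e)).card := rfl
  have hdegv : U.deg v = 3 := by
    have h3 := Finset.card_le_card hSvsub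
    rw [hSvcard] at h3
    rcases hDeg v hvV with h' | h' <;> omega
  have hvonly : ∀ e ∈ U.edges, v ∈ e → e ∈ S := by
    have heq : ({s(u,v), s(v,b), s(v,gb)} : Finset (Sym2 ℕ)) =
        U.edges.filter (fun e => v ∈ e) :=
      Finset.eq_of_subset_of_card_le hSvsub (by rw [hSvcard, ← hdegfilv, hdegv])
    intro e he hve
    have : e ∈ ({s(u,v), s(v,b), s(v,gb)} : Finset (Sym2 ℕ)) := by
      rw [heq]; exact Finset.mem_filter.2 ⟨he, hve⟩
    rw [hS]
    simp only [Finset.mem_insert, Finset.mem_singleton] at this ⊢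
    tauto
  have hEndW : ∀ e ∈ W.edges, ∀ w ∈ e, w ∈ W.verts := by
    intro e he w hw
    rw [hWv]
    rw [hWe'] at he
    rcases Finset.mem_union.1 he with he | he
    · rw [hA] at he
      rcases Finset.mem_insert.1 he with rfl | he
      · rw [Sym2.mem_iff] at hw
        rcases hw with rfl | rfl
        · exact Finset.mem_sdiff.2 ⟨haV, by simp only [Finset.mem_insert, Finset.mem_singleton]; omega⟩
        · exact Finset.mem_sdiff.2 ⟨hgaV, by simp only [Finset.mem_insert, Finset.mem_singleton]; omega⟩
      · rw [Finset.mem_singleton.1 he] at hw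
        rw [Sym2.mem_iff] at hw
        rcases hw with rfl | rfl
        · exact Finset.mem_sdiff.2 ⟨hbV, by simp only [Finset.mem_insert, Finset.mem_singleton]; omega⟩
        · exact Finset.mem_sdiff.2 ⟨hgbV, by simp only [Finset.mem_insert, Finset.mem_singleton]; omega⟩
    · obtain ⟨heE, heS⟩ := Finset.mem_sdiff.1 he
      refine Finset.mem_sdiff.2 ⟨hEnd _ heE w hw, ?_⟩
      simp only [Finset.mem_insert, Finset.mem_singleton]
      push_neg
      constructor
      · rintro rfl
        exact heS (huonly e heE hw)
      · rintro rfl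
        exact heS (hvonly e heE hw)
  have hDegW : ∀ w ∈ W.verts, W.deg w = 1 ∨ W.deg w = 3 := by
    intro w hwm
    rw [hWv, Finset.mem_sdiff] at hwm
    obtain ⟨hwV, hwuv⟩ := hwm
    simp only [Finset.mem_insert, Finset.mem_singleton] at hwuv
    push_neg at hwuv
    obtain ⟨hwu, hwv⟩ := hwuv
    have hform := degFormulaAux hSE hAE w
    rw [← hWe'] at hform
    have key : (A.filter (fun e => w ∈ e)).card = (S.filter (fun e => w ∈ e)).card := by
      by_cases hwa : w = a
      · subst hwa
        have e1 : A.filter (fun e => w ∈ e) = {s(w,ga)} := by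
          rw [hA, Finset.filter_insert, if_pos (by simp), Finset.filter_singleton,
            if_neg (by rw [Sym2.mem_iff]; omega)]
          simp
        have e2 : S.filter (fun e => w ∈ e) = {s(w,u)} := by
          rw [hS, Finset.filter_insert, if_neg (by rw [Sym2.mem_iff]; omega),
            Finset.filter_insert, if_pos (by simp),
            Finset.filter_insert, if_neg (by rw [Sym2.mem_iff]; omega),
            Finset.filter_insert, if_neg (by rw [Sym2.mem_iff]; omega),
            Finset.filter_singleton, if_neg (by rw [Sym2.mem_iff]; omega)]
          simp
        simp [e1, e2]
      · by_cases hwb : w = b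
        · subst hwb
          have e1 : A.filter (fun e => w ∈ e) = {s(w,gb)} := by
            rw [hA, Finset.filter_insert, if_neg (by rw [Sym2.mem_iff]; omega),
              Finset.filter_singleton, if_pos (by simp)]
          have e2 : S.filter (fun e => w ∈ e) = {s(v,w)} := by
            rw [hS, Finset.filter_insert, if_neg (by rw [Sym2.mem_iff]; omega),
              Finset.filter_insert, if_neg (by rw [Sym2.mem_iff]; omega),
              Finset.filter_insert, if_neg (by rw [Sym2.mem_iff]; omega),
              Finset.filter_insert, if_pos (by simp),
              Finset.filter_singleton, if_neg (by rw [Sym2.mem_iff]; omega)]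
            simp
          simp [e1, e2]
        · by_cases hwga : w = ga
          · subst hwga
            by_cases hwgb : w = gb
            · subst hwgb
              have e1 : A.filter (fun e => w ∈ e) = A := by
                rw [hA, Finset.filter_insert, if_pos (by simp),
                  Finset.filter_singleton, if_pos (by rw [Sym2.mem_iff]; omega)]
              have e2 : S.filter (fun e => w ∈ e) = {s(u,w), s(v,w)} := by
                rw [hS, Finset.filter_insert, if_neg (by rw [Sym2.mem_iff]; omega),
                  Finset.filter_insert, if_neg (by rw [Sym2.mem_iff]; omega),
                  Finset.filter_insert, if_pos (by simp),
                  Finset.filter_insert, if_neg (by rw [Sym2.mem_iff]; omega),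
                  Finset.filter_singleton, if_pos (by rw [Sym2.mem_iff]; omega)]
              rw [e1, e2, hAcard, Finset.card_pair (by rw [Ne, Sym2.eq_iff]; omega)]
            · have e1 : A.filter (fun e => w ∈ e) = {s(a,w)} := by
                rw [hA, Finset.filter_insert, if_pos (by simp),
                  Finset.filter_singleton, if_neg (by rw [Sym2.mem_iff]; omega)]
                simp
              have e2 : S.filter (fun e => w ∈ e) = {s(u,w)} := by
                rw [hS, Finset.filter_insert, if_neg (by rw [Sym2.mem_iff]; omega),
                  Finset.filter_insert, if_neg (by rw [Sym2.mem_iff]; omega),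
                  Finset.filter_insert, if_pos (by simp),
                  Finset.filter_insert, if_neg (by rw [Sym2.mem_iff]; omega),
                  Finset.filter_singleton, if_neg (by rw [Sym2.mem_iff]; omega)]
                simp
              simp [e1, e2]
          · by_cases hwgb : w = gb
            · subst hwgb
              have e1 : A.filter (fun e => w ∈ e) = {s(b,w)} := by
                rw [hA, Finset.filter_insert, if_neg (by rw [Sym2.mem_iff]; omega),
                  Finset.filter_singleton, if_pos (by simp)]
              have e2 : S.filter (fun e => w ∈ e) = {s(v,w)} := by
                rw [hS, Finset.filter_insert, if_neg (by rw [Sym2.mem_iff]; omega),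
                  Finset.filter_insert, if_neg (by rw [Sym2.mem_iff]; omega),
                  Finset.filter_insert, if_neg (by rw [Sym2.mem_iff]; omega),
                  Finset.filter_insert, if_neg (by rw [Sym2.mem_iff]; omega),
                  Finset.filter_singleton, if_pos (by simp)]
              simp [e1, e2]
            · have e1 : A.filter (fun e => w ∈ e) = ∅ := by
                rw [hA, Finset.filter_insert, if_neg (by rw [Sym2.mem_iff]; omega),
                  Finset.filter_singleton, if_neg (by rw [Sym2.mem_iff]; omega)]
              have e2 : S.filter (fun e => w ∈ e) = ∅ := by
                rw [hS, Finset.filter_insert, if_neg (by rw [Sym2.mem_iff]; omega),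
                  Finset.filter_insert, if_neg (by rw [Sym2.mem_iff]; omega),
                  Finset.filter_insert, if_neg (by rw [Sym2.mem_iff]; omega),
                  Finset.filter_insert, if_neg (by rw [Sym2.mem_iff]; omega),
                  Finset.filter_singleton, if_neg (by rw [Sym2.mem_iff]; omega)]
              simp [e1, e2]
    have hSle : (S.filter (fun e => w ∈ e)).card ≤ (U.edges.filter (fun e => w ∈ e)).card :=
      Finset.card_le_card (Finset.filter_subset_filter _ hSE)
    have hdw : (U.edges.filter (fun e => w ∈ e)).card = 1 ∨
        (U.edges.filter (fun e => w ∈ e)).card = 3 := hDeg w hwV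
    show (W.edges.filter (fun e => w ∈ e)).card = 1 ∨
      (W.edges.filter (fun e => w ∈ e)).card = 3
    omega
  have hcard := cardFormulaAux hSE hAE
  rw [← hWe'] at hcard
  have hvertcard : W.verts.card + 2 = U.verts.card := by
    have hsub : ({u, v} : Finset ℕ) ⊆ U.verts := by
      intro x hx
      simp only [Finset.mem_insert, Finset.mem_singleton] at hx
      rcases hx with rfl | rfl
      exacts [huV, hvV]
    have hc2 : ({u, v} : Finset ℕ).card = 2 := Finset.card_pair (by omega)
    have h2 := Finset.card_le_card hsub
    rw [hc2] at h2
    rw [hWv, Finset.card_sdiff_of_subset hsub, hc2]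
    omega
  exact ⟨⟨hEndW, Or.inr hDegW⟩, hvertcard, by omega⟩

end AuxForCardAssoc

/-- The number of cherry-picking sequences associated with a complete
cherry-reduction sequence `σ` for an unrooted binary phylogenetic network `U` is
exactly `2 ^ r(U)`. -/
theorem card_assoc_sequences (U : UNet) (X : Finset ℕ) (Us : ℕ → UNet) (ps : ℕ → Pick)
    (k : ℕ) (hU : IsUnrootedBinaryNet U X) (h0 : Us 0 = U)
    (hseq : UCherrySeq Us ps k) (hcomp : (Us k).SingleVertex) :
    Set.ncard {rs : Fin k → Pick | ∀ i : Fin k, PickAssoc (ps i) (rs i)} =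
      2 ^ U.retNum := by
  classical
  subst h0
  -- the invariant holds along the whole sequence
  have hInv : ∀ i, i ≤ k → InvAux (Us i) := by
    intro i
    induction i with
    | zero =>
      intro _
      rcases hU with ⟨x, -, hv, he⟩ | ⟨hend, -, hdeg, -⟩
      · exact ⟨by rw [he]; intro e he'; exact absurd he' (Finset.notMem_empty e), Or.inl he⟩
      · exact ⟨fun e he' w hw => (hend e he').2 w hw, Or.inr hdeg⟩
    | succ i ih =>
      intro hik
      have hi : i < k := hik
      have hstep := hseq i hi
      have hIi := ih (le_of_lt hi)
      cases hps : ps i with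
      | cherry x y =>
        rw [hps] at hstep
        exact (cherryStepAux hstep hIi).1
      | ret x y =>
        rw [hps] at hstep
        exact (retStepAux hstep hIi).1
  -- count of reticulated picks from position i on
  set m : ℕ → ℕ := fun i => ((Finset.Ico i k).filter (fun j => isRetB (ps j) = true)).card
    with hm
  have hmrec : ∀ i, i < k → m i = m (i+1) + (if isRetB (ps i) = true then 1 else 0) := by
    intro i hik
    have hIco : Finset.Ico i k = insert i (Finset.Ico (i+1) k) :=
      (Finset.insert_Ico_add_one_left_eq_Ico hik).symm
    rw [hm]
    simp only [hIco, Finset.filter_insert]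
    by_cases hr : isRetB (ps i) = true
    · rw [if_pos hr, if_pos hr, Finset.card_insert_of_notMem (by simp)]
    · simp [hr]
  -- backward induction for the edge/vertex count
  have hcnt : ∀ d, d ≤ k →
      (Us (k - d)).edges.card + 1 = (Us (k - d)).verts.card + m (k - d) ∧
      1 ≤ (Us (k - d)).verts.card := by
    intro d
    induction d with
    | zero =>
      intro _
      obtain ⟨hv1, he⟩ := hcomp
      have hmk : m k = 0 := by rw [hm]; simp
      simp only [Nat.sub_zero]
      rw [he, hv1, hmk]
      simp
    | succ d ih =>
      intro hdk
      have ihh := ih (Nat.le_of_succ_le hdk)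
      have hik : k - (d+1) < k := by omega
      have hsucc : k - (d+1) + 1 = k - d := by omega
      have hstep := hseq _ hik
      have hIi := hInv _ (le_of_lt hik)
      rw [← hsucc] at ihh
      have hrec := hmrec _ hik
      obtain ⟨ih1, ih2⟩ := ihh
      cases hps : ps (k - (d+1)) with
      | cherry x y =>
        rw [hps] at hstep hrec
        obtain ⟨-, d', hv, he⟩ := cherryStepAux hstep hIi
        simp only [isRetB] at hrec
        simp only [Bool.false_eq_true, if_false] at hrec
        exact ⟨by omega, by omega⟩
      | ret x y =>
        rw [hps] at hstep hrec
        obtain ⟨-, hv, he⟩ := retStepAux hstep hIi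
        simp only [isRetB, if_pos] at hrec
        exact ⟨by omega, by omega⟩
  have hcnt0 := hcnt k (le_refl k)
  rw [Nat.sub_self] at hcnt0
  obtain ⟨hc1, hc2⟩ := hcnt0
  have hretnum : (Us 0).retNum = m 0 := by
    unfold UNet.retNum
    omega
  -- counting the associated sequences
  have hsetT : {rs : Fin k → Pick | ∀ i : Fin k, PickAssoc (ps i) (rs i)} =
      ↑(Fintype.piFinset (fun i : Fin k => pickSet (ps (i : ℕ)))) := by
    ext rs
    simp only [Set.mem_setOf_eq, Finset.mem_coe, Fintype.mem_piFinset]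
    exact forall_congr' fun i => (mem_pickSet _ _).symm
  rw [hsetT, Set.ncard_coe_finset, Fintype.card_piFinset]
  have hprod : ∀ i : Fin k, (pickSet (ps (i:ℕ))).card =
      if isRetB (ps (i:ℕ)) = true then 2 else 1 := by
    intro i
    apply card_pickSet
    intro x y hxy
    have hstep := hseq i i.2
    rw [hxy] at hstep
    exact hstep.1.1
  rw [Finset.prod_congr rfl (fun i _ => hprod i)]
  rw [Fin.prod_univ_eq_prod_range (fun j => if isRetB (ps j) = true then 2 else 1) k]
  rw [Finset.prod_ite (fun _ => 2) (fun _ => 1), Finset.prod_const, Finset.prod_const,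
    one_pow, mul_one]
  rw [hretnum, hm]
  rw [Finset.range_eq_Ico]
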